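/- (L⁴ estimate with k-independent constant) Let g be a positive function on [R*, +∞) that is Lipschitz with constant L > 0, let R_{k+1} = R_k + g(R_k)/(2L) with R_0 ≥ R*, and set ω_k = {(x1, x2) : R_k < x1 < R_{k+1}, |x2| < g(x1)}. There exists a constant c, independent of k and u, such that for every continuously differentiable u on the closure of ω_k vanishing on the lateral boundaries {|x2| = g(x1)}: (∫_{ω_k} |u|⁴ dx)^{1/4} ≤ c·g(R_k)^{1/2}·(∫_{ω_k} |∇u|² dx)^{1/2}. -/

import Mathlib

/-- The slice `ω = {(x₁,x₂) : a < x₁ < b, |x₂| < g(x₁)}` of the outlet. -/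
def outletSlice (g : ℝ → ℝ) (a b : ℝ) : Set (ℝ × ℝ) :=
  {x : ℝ × ℝ | a < x.1 ∧ x.1 < b ∧ |x.2| < g x.1}

/-!
Write `W` and `Φ` for the extensions by zero of `u` and `‖Du‖` from the slice `ω` to `ℝ²`.
Since `u` vanishes on the lateral boundary, `W` is continuous on the strip `a < x₁ < b`, and along
any line through `x` it can be integrated up to the nearest point where the line leaves `ω`, where
it vanishes. This gives, for every `x`,
* `W(x)² ≤ 2 ∫ |W| Φ (x₁, t) dt` (vertical line),
* `W(x)² ≤ (b - a)⁻¹ ∫ W(s, x₂)² ds + 2 ∫ |W| Φ (s, x₂) ds` (horizontal line, averaged over the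
  point where it is entered),
* `|W(x)| ≤ ∫ Φ(x₁, t) dt`.
Multiplying the first two bounds and using Fubini gives `∫ W⁴ ≤ 2Z (Y / (b - a) + 2Z)` with
`Y = ∫ W²` and `Z = ∫ |W| Φ`. If `g ≤ M`, the third bound and Cauchy–Schwarz on the fibres give
the Poincaré inequality `Y ≤ (2M)² T` with `T = ∫ Φ²`, and Cauchy–Schwarz gives `Z² ≤ Y T`.
On `ω_k` the Lipschitz bound yields `M = 3/2 g(R_k)`, while `b - a = g(R_k) / (2L)`, so
`∫ u⁴ ≤ 36 (3L + 1) g(R_k)² T²`.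
-/

open MeasureTheory Set Filter Topology

theorem sq_integral_mul_le {α : Type*} [MeasurableSpace α] {μ : Measure α} {f g : α → ℝ}
    (hf : Integrable (fun x => f x ^ 2) μ) (hg : Integrable (fun x => g x ^ 2) μ)
    (hfg : Integrable (fun x => f x * g x) μ) :
    (∫ x, f x * g x ∂μ) ^ 2 ≤ (∫ x, f x ^ 2 ∂μ) * ∫ x, g x ^ 2 ∂μ := by
  have hquad : ∀ r : ℝ, 0 ≤ (∫ x, g x ^ 2 ∂μ) * (r * r) + 2 * (∫ x, f x * g x ∂μ) * r
      + ∫ x, f x ^ 2 ∂μ := by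
    intro r
    have hexpand : ∫ x, (r * g x + f x) ^ 2 ∂μ = (∫ x, g x ^ 2 ∂μ) * (r * r)
        + 2 * (∫ x, f x * g x ∂μ) * r + ∫ x, f x ^ 2 ∂μ := by
      have h : (fun x => (r * g x + f x) ^ 2)
          = fun x => (r * r) * g x ^ 2 + (2 * r) * (f x * g x) + f x ^ 2 := by
        ext x; ring
      rw [h, integral_add (f := fun x => r * r * g x ^ 2 + 2 * r * (f x * g x))
          ((hg.const_mul _).add (hfg.const_mul _)) hf,
        integral_add (hg.const_mul _) (hfg.const_mul _), integral_const_mul,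
        integral_const_mul]
      ring
    exact hexpand ▸ integral_nonneg fun x => sq_nonneg _
  have := discrim_le_zero hquad
  rw [discrim] at this
  nlinarith

theorem sq_integral_le_mul_integral_sq {α : Type*} [MeasurableSpace α] {μ : Measure α}
    {f : α → ℝ} {s : Set α} (hμs : μ s ≠ ⊤) (hsupp : Function.support f ⊆ s)
    (hf : Integrable f μ) (hf2 : Integrable (fun x => f x ^ 2) μ) :
    (∫ x, f x ∂μ) ^ 2 ≤ μ.real s * ∫ x, f x ^ 2 ∂μ := by
  have hcs := sq_integral_mul_le (μ := μ.restrict s) (g := fun _ => (1 : ℝ))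
    hf2.integrableOn (integrableOn_const hμs) (by simp only [mul_one]; exact hf.integrableOn)
  simp only [mul_one, one_pow, integral_const, smul_eq_mul, measureReal_restrict_apply_univ] at hcs
  rw [← setIntegral_eq_integral_of_forall_compl_eq_zero
    fun x hx => Function.notMem_support.1 (hx ∘ (hsupp ·))]
  refine hcs.trans ?_
  rw [mul_comm]
  exact mul_le_mul_of_nonneg_left
    (setIntegral_le_integral hf2 (ae_of_all _ fun x => sq_nonneg _)) measureReal_nonneg

theorem integrable_of_bounded_of_support_subset {α E : Type*} [MeasurableSpace α]
    [NormedAddCommGroup E] {μ : Measure α} {f : α → E} {s : Set α} {C : ℝ}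
    (hf : AEStronglyMeasurable f μ) (hC : ∀ x, ‖f x‖ ≤ C) (hsupp : Function.support f ⊆ s)
    (hμs : μ s ≠ ⊤) : Integrable f μ :=
  (integrableOn_iff_integrable_of_support_subset hsupp).1
    (Measure.integrableOn_of_bounded hμs hf (ae_of_all _ hC))

theorem integrable_and_integrable_sections {h : ℝ × ℝ → ℝ} {a b c d C : ℝ}
    (hh : Measurable h) (hC : ∀ p, |h p| ≤ C) (hzero : ∀ p ∉ Icc a b ×ˢ Icc c d, h p = 0) :
    Integrable h ∧ (∀ x, Integrable fun y => h (x, y)) ∧ ∀ y, Integrable fun x => h (x, y) := by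
  refine ⟨integrable_of_bounded_of_support_subset hh.aestronglyMeasurable hC
      (fun p hp => not_not.1 fun h' => hp (hzero p h')) ?_, fun x => ?_, fun y => ?_⟩
  · rw [Measure.volume_eq_prod, Measure.prod_prod]
    exact ENNReal.mul_ne_top measure_Icc_lt_top.ne measure_Icc_lt_top.ne
  · exact integrable_of_bounded_of_support_subset
      (hh.comp measurable_prodMk_left).aestronglyMeasurable (fun y => hC (x, y))
      (fun y hy => not_not.1 fun h' => hy (hzero (x, y) fun hp => h' hp.2))
      measure_Icc_lt_top.ne
  · exact integrable_of_bounded_of_support_subset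
      (hh.comp measurable_prodMk_right).aestronglyMeasurable (fun x => hC (x, y))
      (fun x hx => not_not.1 fun h' => hx (hzero (x, y) fun hp => h' hp.1))
      measure_Icc_lt_top.ne

theorem ContDiffOn.exists_bound_fderiv {E F : Type*} [NormedAddCommGroup E] [NormedSpace ℝ E]
    [NormedAddCommGroup F] [NormedSpace ℝ F] {u : E → F} {s K : Set E} (hK : IsCompact K)
    (hs : IsOpen s) (hsK : s ⊆ K) (hu : ContDiffOn ℝ 1 u K) :
    ∃ C, ∀ y ∈ s, ‖fderiv ℝ u y‖ ≤ C := by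
  -- `fderivWithin ℝ u K` need not be continuous (`K` need not have unique derivatives), so we
  -- bound the local derivatives given by the definition of `C¹` and conclude by compactness.
  suffices ∃ C, ∀ y ∈ K ∩ s, ‖fderiv ℝ u y‖ ≤ C by
    simpa [inter_eq_right.2 hsK] using this
  refine hK.induction_on (p := fun t => ∃ C, ∀ y ∈ t ∩ s, ‖fderiv ℝ u y‖ ≤ C)
    ⟨0, by simp⟩ (fun t t' htt' ⟨C, hC⟩ => ⟨C, fun y hy => hC y ⟨htt' hy.1, hy.2⟩⟩)
    (fun t t' ⟨C, hC⟩ ⟨C', hC'⟩ => ⟨max C C', fun y hy => ?_⟩) (fun x hx => ?_)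
  · rcases hy with ⟨hy | hy, hys⟩
    · exact (hC y ⟨hy, hys⟩).trans (le_max_left _ _)
    · exact (hC' y ⟨hy, hys⟩).trans (le_max_right _ _)
  obtain ⟨V, hV, -, f', hf', hf'c⟩ :=
    (contDiffWithinAt_succ_iff_hasFDerivWithinAt (n := 0) (by simp)).1 (by simpa using hu x hx)
  rw [insert_eq_of_mem hx] at hV
  have hnear : ∀ᶠ y in 𝓝[K] x, y ∈ V ∧ ‖f' y‖ < ‖f' x‖ + 1 :=
    Filter.Eventually.and hV <| nhdsWithin_le_of_mem hV <|
      hf'c.continuousWithinAt.norm.eventually (gt_mem_nhds (lt_add_one _))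
  obtain ⟨U, hU, hxU, hUK⟩ := mem_nhdsWithin.1 hnear
  refine ⟨U, mem_nhdsWithin_of_mem_nhds (hU.mem_nhds hxU), ‖f' x‖ + 1, fun y ⟨hyU, hys⟩ => ?_⟩
  have hVy : V ∈ 𝓝 y := mem_of_superset ((hU.inter hs).mem_nhds ⟨hyU, hys⟩)
    fun z hz => (hUK ⟨hz.1, hsK hz.2⟩).1
  rw [((hf' y (hUK ⟨hyU, hsK hys⟩).1).hasFDerivAt hVy).fderiv]
  exact (hUK ⟨hyU, hsK hys⟩).2.le

theorem abs_sub_le_integral_of_abs_deriv_le {f f' φ : ℝ → ℝ} {x y : ℝ}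
    (hf : ContinuousOn f (uIcc x y)) (hderiv : ∀ s ∈ uIoo x y, HasDerivAt f (f' s) s)
    (hbound : ∀ s ∈ uIoo x y, |f' s| ≤ φ s) (hφ0 : 0 ≤ φ) (hφ : Integrable φ) :
    |f y - f x| ≤ ∫ s, φ s := by
  wlog hxy : x ≤ y generalizing x y
  · rw [abs_sub_comm]
    rw [uIcc_comm] at hf
    rw [uIoo_comm] at hderiv hbound
    exact this hf hderiv hbound (le_of_not_ge hxy)
  rw [uIcc_of_le hxy] at hf
  rw [uIoo_of_le hxy] at hderiv hbound
  have hφxy : ∫ s in x..y, φ s ≤ ∫ s, φ s := by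
    rw [intervalIntegral.integral_of_le hxy]
    exact setIntegral_le_integral hφ (ae_of_all _ hφ0)
  have hup := intervalIntegral.sub_le_integral_of_hasDeriv_right_of_le hxy hf
    (fun s hs => (hderiv s hs).hasDerivWithinAt) hφ.integrableOn
    (fun s hs => (le_abs_self _).trans (hbound s hs))
  have hdown := intervalIntegral.sub_le_integral_of_hasDeriv_right_of_le hxy hf.neg
    (fun s hs => (hderiv s hs).neg.hasDerivWithinAt) hφ.integrableOn
    (fun s hs => (neg_le_abs _).trans (hbound s hs))
  simp only [Pi.neg_apply] at hdown
  exact abs_le.2 ⟨by linarith, by linarith⟩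

theorem exists_mem_uIcc_uIoo_subset {O : Set ℝ} (hO : IsOpen O) (x t : ℝ) :
    ∃ c ∈ uIcc x t, (c = t ∨ c ∉ O) ∧ uIoo x c ⊆ O := by
  -- `c` is the point of `(uIcc x t \ O) ∪ {t}` nearest to `x`.
  have hS : IsCompact (uIcc x t \ O ∪ {t}) :=
    (isCompact_uIcc.diff hO).union isCompact_singleton
  obtain ⟨c, hcS, hmin⟩ := hS.exists_isMinOn (by simp)
    (f := fun s => |s - x|) (by fun_prop)
  have hc : c ∈ uIcc x t := by
    rcases hcS with hc | rfl
    · exact hc.1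
    · exact right_mem_uIcc
  refine ⟨c, hc, by rcases hcS with hc | hc <;> simp_all, fun s hs => ?_⟩
  by_contra hsO
  have hclose : |s - x| < |c - x| := by
    rcases le_total x c with h | h
    · rw [uIoo_of_le h] at hs
      rw [abs_of_pos (by linarith [hs.1]), abs_of_nonneg (by linarith)]
      linarith [hs.2]
    · rw [uIoo_of_ge h] at hs
      rw [abs_of_neg (by linarith [hs.2]), abs_of_nonpos (by linarith)]
      linarith [hs.1]
  have hsS : s ∈ uIcc x t \ O ∪ {t} :=
    Or.inl ⟨uIcc_subset_uIcc_left hc (uIoo_subset_uIcc_self hs), hsO⟩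
  exact hclose.not_ge (hmin hsS)

theorem abs_le_abs_add_integral_of_eq_zero_off {O : Set ℝ} (hO : IsOpen O) {f f' φ : ℝ → ℝ}
    {x t : ℝ} (hf : ContinuousOn f (uIcc x t)) (hderiv : ∀ s ∈ O, HasDerivAt f (f' s) s)
    (hbound : ∀ s ∈ O, |f' s| ≤ φ s) (hzero : ∀ s ∉ O, f s = 0) (hφ0 : 0 ≤ φ)
    (hφ : Integrable φ) :
    |f x| ≤ |f t| + ∫ s, φ s := by
  obtain ⟨c, hc, hct, hsub⟩ := exists_mem_uIcc_uIoo_subset hO x t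
  have hfc : |f c| ≤ |f t| := by
    rcases hct with rfl | hcO
    · exact le_rfl
    · simp [hzero c hcO]
  have hxc := abs_sub_le_integral_of_abs_deriv_le (hf.mono (uIcc_subset_uIcc_left hc))
    (fun s hs => hderiv s (hsub hs)) (fun s hs => hbound s (hsub hs)) hφ0 hφ
  linarith [abs_sub_abs_le_abs_sub (f x) (f c), abs_sub_comm (f c) (f x)]

theorem sq_le_sq_add_integral_of_eq_zero_off {O : Set ℝ} (hO : IsOpen O) {f f' φ : ℝ → ℝ}
    {x t : ℝ} (hf : ContinuousOn f (uIcc x t)) (hderiv : ∀ s ∈ O, HasDerivAt f (f' s) s)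
    (hbound : ∀ s ∈ O, |f' s| ≤ φ s) (hzero : ∀ s ∉ O, f s = 0) (hφ0 : 0 ≤ φ)
    (hint : Integrable fun s => |f s| * φ s) :
    f x ^ 2 ≤ f t ^ 2 + 2 * ∫ s, |f s| * φ s := by
  have h := abs_le_abs_add_integral_of_eq_zero_off hO (f := fun s => f s ^ 2)
    (f' := fun s => 2 * f s * f' s) (φ := fun s => 2 * (|f s| * φ s)) (hf.pow 2)
    (fun s hs => by simpa using (hderiv s hs).fun_pow 2)
    (fun s hs => by
      rw [abs_mul, abs_mul, abs_two, mul_assoc]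
      gcongr
      exact hbound s hs)
    (fun s hs => by simp [hzero s hs])
    (fun s => mul_nonneg zero_le_two (mul_nonneg (abs_nonneg _) (hφ0 s))) (hint.const_mul 2)
  simpa only [abs_pow, sq_abs, integral_const_mul] using h

theorem mul_le_integral_of_forall_le {f : ℝ → ℝ} {a b c : ℝ} (hab : a ≤ b)
    (hc : ∀ t ∈ Ioo a b, c ≤ f t) (hf0 : 0 ≤ f) (hf : Integrable f) :
    (b - a) * c ≤ ∫ t, f t := by
  calc (b - a) * c = ∫ _ in Ioo a b, c := by
        rw [setIntegral_const, Real.volume_real_Ioo_of_le hab, smul_eq_mul]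
    _ ≤ ∫ t in Ioo a b, f t :=
        setIntegral_mono_on (integrableOn_const measure_Ioo_lt_top.ne) hf.integrableOn
          measurableSet_Ioo hc
    _ ≤ ∫ t, f t := setIntegral_le_integral hf (ae_of_all _ hf0)

theorem abs_indicator_le_abs {α : Type*} {s : Set α} {f : α → ℝ} {C : ℝ}
    (hC : ∀ x ∈ s, |f x| ≤ C) (x : α) : |s.indicator f x| ≤ |C| := by
  by_cases hx : x ∈ s
  · rw [indicator_of_mem hx]; exact (hC x hx).trans (le_abs_self C)
  · rw [indicator_of_notMem hx, abs_zero]; exact abs_nonneg C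

theorem ContinuousOn.measurable_indicator {α γ : Type*} [TopologicalSpace α] [MeasurableSpace α]
    [OpensMeasurableSpace α] [TopologicalSpace γ] [MeasurableSpace γ] [BorelSpace γ] [Zero γ]
    {f : α → γ} {s : Set α} (hf : ContinuousOn f s) (hs : MeasurableSet s) :
    Measurable (s.indicator f) := by
  classical
  rw [← piecewise_eq_indicator]
  exact hf.measurable_piecewise continuousOn_const hs

section ZeroExtension

variable {E : Type*} [NormedAddCommGroup E] [NormedSpace ℝ E] {Ω : Set E} {u : E → ℝ}
  {γ : ℝ → E} {v : E}

theorem hasDerivAt_indicator_comp (hΩ : IsOpen Ω) {s : ℝ} (hγ : HasDerivAt γ v s)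
    (hs : γ s ∈ Ω) (hu : DifferentiableAt ℝ u (γ s)) :
    HasDerivAt (fun s => Ω.indicator u (γ s)) (fderiv ℝ u (γ s) v) s :=
  (hu.hasFDerivAt.congr_of_eventuallyEq
    (eventuallyEq_of_mem (hΩ.mem_nhds hs) fun _ hy => indicator_of_mem hy u)).comp_hasDerivAt s
    hγ

theorem abs_fderiv_apply_le_indicator (hv : ‖v‖ ≤ 1) {p : E} (hp : p ∈ Ω) :
    |fderiv ℝ u p v| ≤ Ω.indicator (fun q => ‖fderiv ℝ u q‖) p := by
  rw [indicator_of_mem hp]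
  simpa using (fderiv ℝ u p).le_of_opNorm_le_of_le le_rfl hv

theorem abs_indicator_comp_le (hΩ : IsOpen Ω) (hu : DifferentiableOn ℝ u Ω)
    (hγ : ∀ s, HasDerivAt γ v s) (hv : ‖v‖ ≤ 1) {x t : ℝ}
    (hcont : ContinuousOn (fun s => Ω.indicator u (γ s)) (uIcc x t))
    (hint : Integrable fun s => Ω.indicator (fun q => ‖fderiv ℝ u q‖) (γ s)) :
    |Ω.indicator u (γ x)| ≤
      |Ω.indicator u (γ t)| + ∫ s, Ω.indicator (fun q => ‖fderiv ℝ u q‖) (γ s) :=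
  abs_le_abs_add_integral_of_eq_zero_off
    (hΩ.preimage (continuous_iff_continuousAt.2 fun s => (hγ s).continuousAt)) hcont
    (fun s hs => hasDerivAt_indicator_comp hΩ (hγ s) hs (hu.differentiableAt (hΩ.mem_nhds hs)))
    (fun _ hs => abs_fderiv_apply_le_indicator hv hs)
    (fun s hs => indicator_of_notMem (show γ s ∉ Ω from hs) u)
    (fun _ => indicator_nonneg (fun _ _ => norm_nonneg _) _) hint

theorem sq_indicator_comp_le (hΩ : IsOpen Ω) (hu : DifferentiableOn ℝ u Ω)
    (hγ : ∀ s, HasDerivAt γ v s) (hv : ‖v‖ ≤ 1) {x t : ℝ}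
    (hcont : ContinuousOn (fun s => Ω.indicator u (γ s)) (uIcc x t))
    (hint : Integrable fun s =>
      |Ω.indicator u (γ s)| * Ω.indicator (fun q => ‖fderiv ℝ u q‖) (γ s)) :
    Ω.indicator u (γ x) ^ 2 ≤ Ω.indicator u (γ t) ^ 2 +
      2 * ∫ s, |Ω.indicator u (γ s)| * Ω.indicator (fun q => ‖fderiv ℝ u q‖) (γ s) :=
  sq_le_sq_add_integral_of_eq_zero_off
    (hΩ.preimage (continuous_iff_continuousAt.2 fun s => (hγ s).continuousAt)) hcont
    (fun s hs => hasDerivAt_indicator_comp hΩ (hγ s) hs (hu.differentiableAt (hΩ.mem_nhds hs)))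
    (fun _ hs => abs_fderiv_apply_le_indicator hv hs)
    (fun s hs => indicator_of_notMem (show γ s ∉ Ω from hs) u)
    (fun _ => indicator_nonneg (fun _ _ => norm_nonneg _) _) hint

end ZeroExtension

section Fubini

variable {w φ : ℝ × ℝ → ℝ}

theorem integral_pow_four_le_of_fibre_bounds {ℓ : ℝ}
    (hw2 : Integrable fun p => w p ^ 2) (hwφ : Integrable fun p => |w p| * φ p)
    (hV : ∀ p, w p ^ 2 ≤ 2 * ∫ t, |w (p.1, t)| * φ (p.1, t))
    (hH : ∀ p, w p ^ 2 ≤ ℓ⁻¹ * (∫ s, w (s, p.2) ^ 2) + 2 * ∫ s, |w (s, p.2)| * φ (s, p.2)) :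
    ∫ p, w p ^ 4 ≤
      (2 * ∫ p, |w p| * φ p) * (ℓ⁻¹ * (∫ p, w p ^ 2) + 2 * ∫ p, |w p| * φ p) := by
  rw [Measure.volume_eq_prod] at hw2 hwφ ⊢
  set A : ℝ → ℝ := fun x => 2 * ∫ t, |w (x, t)| * φ (x, t)
  set B : ℝ → ℝ := fun y => ℓ⁻¹ * (∫ s, w (s, y) ^ 2) + 2 * ∫ s, |w (s, y)| * φ (s, y)
  have hA : Integrable A := hwφ.integral_prod_left.const_mul 2
  have hB : Integrable B :=
    (hw2.integral_prod_right.const_mul _).add (hwφ.integral_prod_right.const_mul 2)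
  calc ∫ p, w p ^ 4 ∂volume.prod volume
      ≤ ∫ p, A p.1 * B p.2 ∂volume.prod volume := by
        refine integral_mono_of_nonneg (ae_of_all _ fun p => by positivity) (hA.mul_prod hB)
          (ae_of_all _ fun p => ?_)
        calc w p ^ 4 = w p ^ 2 * w p ^ 2 := by ring
          _ ≤ A p.1 * B p.2 :=
            mul_le_mul (hV p) (hH p) (sq_nonneg _) ((sq_nonneg _).trans (hV p))
    _ = (∫ x, A x) * ∫ y, B y := integral_prod_mul A B
    _ = _ := by
        simp only [A, B]
        rw [integral_add (hw2.integral_prod_right.const_mul _)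
            (hwφ.integral_prod_right.const_mul 2), integral_const_mul, integral_const_mul,
          integral_const_mul, ← integral_prod _ hwφ, ← integral_prod_symm _ hw2,
          ← integral_prod_symm _ hwφ]

theorem integral_sq_le_of_abs_le_integral {M : ℝ} (hM : 0 ≤ M)
    (hw2 : Integrable fun p => w p ^ 2) (hφ2 : Integrable fun p => φ p ^ 2)
    (hφrow : ∀ x, Integrable fun t => φ (x, t)) (hφ2row : ∀ x, Integrable fun t => φ (x, t) ^ 2)
    (hφsupp : ∀ p, M < |p.2| → φ p = 0) (hwsupp : ∀ p, M < |p.2| → w p = 0)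
    (hP : ∀ p, |w p| ≤ ∫ t, φ (p.1, t)) :
    ∫ p, w p ^ 2 ≤ (2 * M) ^ 2 * ∫ p, φ p ^ 2 := by
  have hvol : volume.real (Icc (-M) M) = 2 * M := by
    rw [Real.volume_real_Icc, max_eq_left (by linarith)]; ring
  have hpoint : ∀ p, w p ^ 2 ≤ 2 * M * ∫ t, φ (p.1, t) ^ 2 := by
    intro p
    calc w p ^ 2 = |w p| ^ 2 := (sq_abs _).symm
      _ ≤ (∫ t, φ (p.1, t)) ^ 2 := by gcongr; exact hP p
      _ ≤ _ := hvol ▸ sq_integral_le_mul_integral_sq measure_Icc_lt_top.ne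
          (fun t ht => abs_le.1 (not_lt.1 fun h => ht (hφsupp _ h))) (hφrow p.1) (hφ2row p.1)
  have hfibre : ∀ x, ∫ t, w (x, t) ^ 2 ≤ (2 * M) ^ 2 * ∫ t, φ (x, t) ^ 2 := by
    intro x
    rw [← setIntegral_eq_integral_of_forall_compl_eq_zero (s := Icc (-M) M) fun t ht => by
      rw [hwsupp (x, t) (not_le.1 fun h => ht (abs_le.1 h))]; ring]
    calc ∫ t in Icc (-M) M, w (x, t) ^ 2
        ≤ (2 * M * ∫ t, φ (x, t) ^ 2) * volume.real (Icc (-M) M) :=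
          (Real.le_norm_self _).trans (norm_setIntegral_le_of_norm_le_const measure_Icc_lt_top
            fun t _ => by simpa [sq_abs] using hpoint (x, t))
      _ = (2 * M) ^ 2 * ∫ t, φ (x, t) ^ 2 := by rw [hvol]; ring
  rw [Measure.volume_eq_prod] at hw2 hφ2 ⊢
  rw [integral_prod _ hw2, integral_prod _ hφ2, ← integral_const_mul]
  exact integral_mono hw2.integral_prod_left (hφ2.integral_prod_left.const_mul _) hfibre

theorem integral_pow_four_le_of_fibre_estimates {ℓ M : ℝ} (hℓ : 0 < ℓ) (hM : 0 ≤ M)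
    (hφ0 : 0 ≤ φ) (hw2 : Integrable fun p => w p ^ 2) (hφ2 : Integrable fun p => φ p ^ 2)
    (hwφ : Integrable fun p => |w p| * φ p)
    (hφrow : ∀ x, Integrable fun t => φ (x, t)) (hφ2row : ∀ x, Integrable fun t => φ (x, t) ^ 2)
    (hφsupp : ∀ p, M < |p.2| → φ p = 0) (hwsupp : ∀ p, M < |p.2| → w p = 0)
    (hV : ∀ p, w p ^ 2 ≤ 2 * ∫ t, |w (p.1, t)| * φ (p.1, t))
    (hH : ∀ p, w p ^ 2 ≤ ℓ⁻¹ * (∫ s, w (s, p.2) ^ 2) + 2 * ∫ s, |w (s, p.2)| * φ (s, p.2))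
    (hP : ∀ p, |w p| ≤ ∫ t, φ (p.1, t)) :
    ∫ p, w p ^ 4 ≤ 16 * M ^ 2 * (M / ℓ + 1) * (∫ p, φ p ^ 2) ^ 2 := by
  set T := ∫ p, φ p ^ 2
  have hT : 0 ≤ T := integral_nonneg fun p => sq_nonneg _
  have hZ0 : 0 ≤ ∫ p, |w p| * φ p := integral_nonneg fun p => mul_nonneg (abs_nonneg _) (hφ0 p)
  have hY := integral_sq_le_of_abs_le_integral hM hw2 hφ2 hφrow hφ2row hφsupp hwsupp hP
  have hZ : ∫ p, |w p| * φ p ≤ 2 * M * T := by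
    have hcs := sq_integral_mul_le (by simpa using hw2) hφ2 hwφ
    simp only [sq_abs] at hcs
    refine (pow_le_pow_iff_left₀ hZ0 (by positivity) two_ne_zero).1 (hcs.trans ?_)
    calc (∫ p, w p ^ 2) * T ≤ (2 * M) ^ 2 * T * T := mul_le_mul_of_nonneg_right hY hT
      _ = (2 * M * T) ^ 2 := by ring
  calc ∫ p, w p ^ 4
      ≤ (2 * ∫ p, |w p| * φ p) * (ℓ⁻¹ * (∫ p, w p ^ 2) + 2 * ∫ p, |w p| * φ p) :=
        integral_pow_four_le_of_fibre_bounds hw2 hwφ hV hH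
    _ ≤ (2 * (2 * M * T)) * (ℓ⁻¹ * ((2 * M) ^ 2 * T) + 2 * (2 * M * T)) := by gcongr
    _ = 16 * M ^ 2 * (M / ℓ + 1) * T ^ 2 := by field_simp; ring

end Fubini

section OutletSlice

variable {g : ℝ → ℝ} {a b M : ℝ} {u : ℝ × ℝ → ℝ}

theorem isOpen_outletSlice (hg : ContinuousOn g (Ioo a b)) : IsOpen (outletSlice g a b) := by
  have h : outletSlice g a b =
      (Ioo a b ×ˢ univ) ∩ (fun p : ℝ × ℝ => g p.1 - |p.2|) ⁻¹' Ioi 0 := by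
    ext p
    simp [outletSlice, and_assoc]
  rw [h]
  exact ((hg.comp continuousOn_fst fun p hp => hp.1).sub continuous_snd.abs.continuousOn)
    |>.isOpen_inter_preimage (isOpen_Ioo.prod isOpen_univ) isOpen_Ioi

theorem outletSlice_subset_Icc_prod_Icc (hgM : ∀ t ∈ Ioo a b, g t ≤ M) :
    outletSlice g a b ⊆ Icc a b ×ˢ Icc (-M) M := fun _ ⟨h1, h2, h3⟩ =>
  ⟨⟨h1.le, h2.le⟩, abs_le.1 (h3.le.trans (hgM _ ⟨h1, h2⟩))⟩

theorem abs_eq_of_mem_frontier_outletSlice (hg : ContinuousOn g (Ioo a b)) {p : ℝ × ℝ}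
    (hp : p ∈ frontier (outletSlice g a b)) (hp1 : p.1 ∈ Ioo a b) : |p.2| = g p.1 := by
  have hcont : ContinuousAt (fun q : ℝ × ℝ => g q.1 - |q.2|) p :=
    ((hg.continuousAt (isOpen_Ioo.mem_nhds hp1)).comp continuousAt_fst).sub
      continuous_snd.abs.continuousAt
  have hle : 0 ≤ g p.1 - |p.2| :=
    closure_minimal (image_subset_iff.2 fun _ hq => sub_nonneg.2 hq.2.2.le) isClosed_Ici
      (hcont.continuousWithinAt.mem_closure_image hp.1)
  have hnot : ¬ |p.2| < g p.1 := fun h =>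
    hp.2 (by rw [(isOpen_outletSlice hg).interior_eq]; exact ⟨hp1.1, hp1.2, h⟩)
  linarith [not_lt.1 hnot]

theorem continuousOn_indicator_outletSlice (hg : ContinuousOn g (Ioo a b))
    (hu : ContinuousOn u (closure (outletSlice g a b)))
    (hvan : ∀ x ∈ Ioo a b, u (x, g x) = 0 ∧ u (x, -g x) = 0) :
    ContinuousOn ((outletSlice g a b).indicator u) (Ioo a b ×ˢ univ) := by
  classical
  rw [← piecewise_eq_indicator]
  refine ContinuousOn.piecewise (fun p ⟨hp1, hp⟩ => ?_) (hu.mono inter_subset_right)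
    continuousOn_const
  have habs := abs_eq_of_mem_frontier_outletSlice hg hp hp1.1
  rcases (abs_eq (habs ▸ abs_nonneg _)).1 habs with h | h
  · simpa [← h] using (hvan p.1 hp1.1).1
  · simpa [← h] using (hvan p.1 hp1.1).2

local notation "W" => Set.indicator (outletSlice g a b) u
local notation "Φ" => Set.indicator (outletSlice g a b) fun q => ‖fderiv ℝ u q‖

theorem sq_indicator_le_vertical (hg : ContinuousOn g (Ioo a b))
    (hu : ContinuousOn u (closure (outletSlice g a b)))
    (hdu : DifferentiableOn ℝ u (outletSlice g a b))
    (hvan : ∀ x ∈ Ioo a b, u (x, g x) = 0 ∧ u (x, -g x) = 0) (p : ℝ × ℝ)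
    (hint : Integrable fun t => |W (p.1, t)| * Φ (p.1, t)) :
    W p ^ 2 ≤ 2 * ∫ t, |W (p.1, t)| * Φ (p.1, t) := by
  by_cases hp1 : p.1 ∈ Ioo a b
  · have hcont : ContinuousOn (fun t => W (p.1, t)) (uIcc p.2 (g p.1)) :=
      (continuousOn_indicator_outletSlice hg hu hvan).comp (by fun_prop)
        fun t _ => ⟨hp1, trivial⟩
    have hout : (p.1, g p.1) ∉ outletSlice g a b := fun h => (le_abs_self _).not_gt h.2.2
    simpa [indicator_of_notMem hout] using
      sq_indicator_comp_le (isOpen_outletSlice hg) hdu (γ := fun t => (p.1, t)) (v := (0, 1))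
        (fun t => (hasDerivAt_const t p.1).prodMk (hasDerivAt_id t)) (by simp) hcont hint
  · rw [indicator_of_notMem fun h => hp1 ⟨h.1, h.2.1⟩, zero_pow two_ne_zero]
    exact mul_nonneg zero_le_two <| integral_nonneg fun t =>
      mul_nonneg (abs_nonneg _) (indicator_nonneg (fun _ _ => norm_nonneg _) _)

theorem abs_indicator_le_vertical (hg : ContinuousOn g (Ioo a b))
    (hu : ContinuousOn u (closure (outletSlice g a b)))
    (hdu : DifferentiableOn ℝ u (outletSlice g a b))
    (hvan : ∀ x ∈ Ioo a b, u (x, g x) = 0 ∧ u (x, -g x) = 0) (p : ℝ × ℝ)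
    (hint : Integrable fun t => Φ (p.1, t)) :
    |W p| ≤ ∫ t, Φ (p.1, t) := by
  by_cases hp1 : p.1 ∈ Ioo a b
  · have hcont : ContinuousOn (fun t => W (p.1, t)) (uIcc p.2 (g p.1)) :=
      (continuousOn_indicator_outletSlice hg hu hvan).comp (by fun_prop)
        fun t _ => ⟨hp1, trivial⟩
    have hout : (p.1, g p.1) ∉ outletSlice g a b := fun h => (le_abs_self _).not_gt h.2.2
    simpa [indicator_of_notMem hout] using
      abs_indicator_comp_le (isOpen_outletSlice hg) hdu (γ := fun t => (p.1, t)) (v := (0, 1))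
        (fun t => (hasDerivAt_const t p.1).prodMk (hasDerivAt_id t)) (by simp) hcont hint
  · rw [indicator_of_notMem fun h => hp1 ⟨h.1, h.2.1⟩, abs_zero]
    exact integral_nonneg fun t => indicator_nonneg (fun _ _ => norm_nonneg _) _

theorem sq_indicator_le_horizontal (hab : a < b) (hg : ContinuousOn g (Ioo a b))
    (hu : ContinuousOn u (closure (outletSlice g a b)))
    (hdu : DifferentiableOn ℝ u (outletSlice g a b))
    (hvan : ∀ x ∈ Ioo a b, u (x, g x) = 0 ∧ u (x, -g x) = 0) (p : ℝ × ℝ)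
    (hint2 : Integrable fun s => W (s, p.2) ^ 2)
    (hint : Integrable fun s => |W (s, p.2)| * Φ (s, p.2)) :
    W p ^ 2 ≤ (b - a)⁻¹ * (∫ s, W (s, p.2) ^ 2) + 2 * ∫ s, |W (s, p.2)| * Φ (s, p.2) := by
  have hline : ∀ t ∈ Ioo a b,
      W p ^ 2 - 2 * ∫ s, |W (s, p.2)| * Φ (s, p.2) ≤ W (t, p.2) ^ 2 := by
    intro t ht
    by_cases hp1 : p.1 ∈ Ioo a b
    · have hcont : ContinuousOn (fun s => W (s, p.2)) (uIcc p.1 t) :=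
        (continuousOn_indicator_outletSlice hg hu hvan).comp (by fun_prop)
          fun s hs => ⟨ordConnected_Ioo.uIcc_subset hp1 ht hs, trivial⟩
      have := sq_indicator_comp_le (isOpen_outletSlice hg) hdu (γ := fun s => (s, p.2))
        (v := (1, 0)) (fun s => (hasDerivAt_id s).prodMk (hasDerivAt_const s p.2)) (by simp)
        hcont hint
      linarith
    · rw [indicator_of_notMem fun h => hp1 ⟨h.1, h.2.1⟩]
      have : 0 ≤ ∫ s, |W (s, p.2)| * Φ (s, p.2) := integral_nonneg fun s =>
        mul_nonneg (abs_nonneg _) (indicator_nonneg (fun _ _ => norm_nonneg _) _)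
      nlinarith [sq_nonneg (W (t, p.2))]
  have havg := mul_le_integral_of_forall_le hab.le hline (fun s => sq_nonneg _) hint2
  rw [← sub_le_iff_le_add, inv_mul_eq_div, le_div_iff₀ (sub_pos.2 hab), mul_comm]
  exact havg

theorem integral_pow_four_le_outletSlice (hab : a < b) (hM : 0 ≤ M)
    (hg : ContinuousOn g (Ioo a b)) (hgM : ∀ t ∈ Ioo a b, g t ≤ M)
    (hu : ContDiffOn ℝ 1 u (closure (outletSlice g a b)))
    (hvan : ∀ x ∈ Ioo a b, u (x, g x) = 0 ∧ u (x, -g x) = 0) :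
    ∫ p in outletSlice g a b, u p ^ 4 ≤
      16 * M ^ 2 * (M / (b - a) + 1) * (∫ p in outletSlice g a b, ‖fderiv ℝ u p‖ ^ 2) ^ 2 := by
  have hω := isOpen_outletSlice hg
  have hbox := outletSlice_subset_Icc_prod_Icc hgM
  have hK := (isCompact_Icc.prod isCompact_Icc).closure_of_subset hbox
  obtain ⟨C, hC⟩ := hK.exists_bound_of_continuousOn hu.continuousOn
  obtain ⟨D, hD⟩ := hu.exists_bound_fderiv hK hω subset_closure
  have hdu : DifferentiableOn ℝ u (outletSlice g a b) :=
    (hu.differentiableOn one_ne_zero).mono subset_closure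
  have hWm : Measurable W :=
    (hu.continuousOn.mono subset_closure).measurable_indicator hω.measurableSet
  have hΦm : Measurable Φ := (measurable_fderiv ℝ u).norm.indicator hω.measurableSet
  have hWC : ∀ p, |W p| ≤ |C| := abs_indicator_le_abs fun p hp => hC p (subset_closure hp)
  have hΦD : ∀ p, |Φ p| ≤ |D| := abs_indicator_le_abs fun p hp => (abs_norm _).trans_le (hD p hp)
  have hWout : ∀ p ∉ Icc a b ×ˢ Icc (-M) M, W p = 0 := fun p hp =>
    indicator_of_notMem (fun h => hp (hbox h)) u
  have hΦout : ∀ p ∉ Icc a b ×ˢ Icc (-M) M, Φ p = 0 := fun p hp =>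
    indicator_of_notMem (fun h => hp (hbox h)) _
  obtain ⟨hW2, -, hW2col⟩ := integrable_and_integrable_sections (hWm.pow_const 2)
    (fun p => by rw [abs_pow]; exact pow_le_pow_left₀ (abs_nonneg _) (hWC p) 2)
    (fun p (hp : p ∉ Icc a b ×ˢ Icc (-M) M) => by simp [hWout p hp])
  obtain ⟨hΦ2, hΦ2row, -⟩ := integrable_and_integrable_sections (hΦm.pow_const 2)
    (fun p => by rw [abs_pow]; exact pow_le_pow_left₀ (abs_nonneg _) (hΦD p) 2)
    (fun p (hp : p ∉ Icc a b ×ˢ Icc (-M) M) => by simp [hΦout p hp])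
  obtain ⟨hWΦ, hWΦrow, hWΦcol⟩ := integrable_and_integrable_sections
    (h := fun p => |W p| * Φ p) (hWm.abs.mul hΦm)
    (fun p => by
      rw [abs_mul, abs_abs]; exact mul_le_mul (hWC p) (hΦD p) (abs_nonneg _) (abs_nonneg _))
    (fun p (hp : p ∉ Icc a b ×ˢ Icc (-M) M) => by simp [hWout p hp])
  obtain ⟨-, hΦrow, -⟩ := integrable_and_integrable_sections hΦm hΦD hΦout
  have hout : ∀ p : ℝ × ℝ, M < |p.2| → p ∉ Icc a b ×ˢ Icc (-M) M := fun _ hp h =>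
    hp.not_ge (abs_le.2 h.2)
  have key := integral_pow_four_le_of_fibre_estimates (sub_pos.2 hab) hM
    (fun _ => indicator_nonneg (fun _ _ => norm_nonneg _) _) hW2 hΦ2 hWΦ hΦrow hΦ2row
    (fun p hp => hΦout p (hout p hp)) (fun p hp => hWout p (hout p hp))
    (fun p => sq_indicator_le_vertical hg hu.continuousOn hdu hvan p (hWΦrow p.1))
    (fun p => sq_indicator_le_horizontal hab hg hu.continuousOn hdu hvan p (hW2col p.2)
      (hWΦcol p.2))
    (fun p => abs_indicator_le_vertical hg hu.continuousOn hdu hvan p (hΦrow p.1))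
  rwa [← integral_indicator hω.measurableSet, ← integral_indicator hω.measurableSet,
    ← Function.comp_def (fun x : ℝ => x ^ 4), ← Function.comp_def (fun x : ℝ => x ^ 2),
    indicator_comp_of_zero (by norm_num), indicator_comp_of_zero (by norm_num)]

end OutletSlice

theorem rpow_one_div_four_le_of_le {I K x y : ℝ} (hI : 0 ≤ I) (hK : 0 ≤ K) (hx : 0 ≤ x)
    (hy : 0 ≤ y) (h : I ≤ K * x ^ 2 * y ^ 2) :
    I ^ ((1 : ℝ) / 4) ≤ K ^ ((1 : ℝ) / 4) * x ^ ((1 : ℝ) / 2) * y ^ ((1 : ℝ) / 2) := by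
  have hsq : ∀ z : ℝ, 0 ≤ z → (z ^ 2) ^ ((1 : ℝ) / 4) = z ^ ((1 : ℝ) / 2) := fun z hz => by
    rw [← Real.rpow_natCast, ← Real.rpow_mul hz]; norm_num
  calc I ^ ((1 : ℝ) / 4) ≤ (K * x ^ 2 * y ^ 2) ^ ((1 : ℝ) / 4) :=
        Real.rpow_le_rpow hI h (by norm_num)
    _ = _ := by rw [Real.mul_rpow (by positivity) (by positivity),
      Real.mul_rpow hK (by positivity), hsq x hx, hsq y hy]

section OutletSequence

variable {Rstar L : ℝ} {g : ℝ → ℝ}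

theorem le_of_succ_eq_add_div {R : ℕ → ℝ} (hL : 0 < L) (hg_pos : ∀ t, Rstar ≤ t → 0 < g t)
    (hR0 : Rstar ≤ R 0) (hRrec : ∀ j, R (j + 1) = R j + g (R j) / (2 * L)) (j : ℕ) :
    Rstar ≤ R j := by
  induction j with
  | zero => exact hR0
  | succ j ih => rw [hRrec]; linarith [div_pos (hg_pos _ ih) (by positivity : (0 : ℝ) < 2 * L)]

theorem le_three_halves_mul_of_lipschitz (hL : 0 < L)
    (hg_lip : ∀ t1 t2, Rstar ≤ t1 → Rstar ≤ t2 → |g t1 - g t2| ≤ L * |t1 - t2|) {r t : ℝ}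
    (hr : Rstar ≤ r) (ht : t ∈ Icc r (r + g r / (2 * L))) : g t ≤ 3 / 2 * g r := by
  have hdist : L * |t - r| ≤ g r / 2 := by
    rw [abs_of_nonneg (sub_nonneg.2 ht.1)]
    calc L * (t - r) ≤ L * (g r / (2 * L)) := by gcongr; linarith [ht.2]
      _ = g r / 2 := by field_simp
  linarith [(abs_le.1 (hg_lip t r (hr.trans ht.1) hr)).2]

end OutletSequence

/-- Lemma 5.3 (`L⁴` estimate with `k`-independent constant): for a positive `L`-Lipschitz
`g` and the sequence `R_{k+1} = R_k + g(R_k)/(2L)`, there is a constant `c` independent of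
`k` and `u` such that every `C¹` function `u` on the closure of
`ω_k = {R_k < x₁ < R_{k+1}, |x₂| < g(x₁)}` vanishing on the lateral boundaries satisfies
`‖u‖_{L⁴(ω_k)} ≤ c·g(R_k)^{1/2}·‖∇u‖_{L²(ω_k)}`. -/
theorem ladyzhenskaya_uniform_constant
    (Rstar L : ℝ) (g : ℝ → ℝ) (hL : 0 < L)
    (hg_pos : ∀ t, Rstar ≤ t → 0 < g t)
    (hg_lip : ∀ t1 t2, Rstar ≤ t1 → Rstar ≤ t2 → |g t1 - g t2| ≤ L * |t1 - t2|)
    (R : ℕ → ℝ) (hR0 : Rstar ≤ R 0)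
    (hRrec : ∀ j, R (j + 1) = R j + g (R j) / (2 * L)) :
    ∃ c : ℝ, 0 < c ∧
      ∀ (k : ℕ) (u : ℝ × ℝ → ℝ),
        ContDiffOn ℝ 1 u (closure (outletSlice g (R k) (R (k + 1)))) →
        (∀ x1 ∈ Set.Icc (R k) (R (k + 1)), u (x1, g x1) = 0 ∧ u (x1, -(g x1)) = 0) →
        (∫ x in outletSlice g (R k) (R (k + 1)), (u x) ^ 4) ^ ((1 : ℝ) / 4) ≤
          c * (g (R k)) ^ ((1 : ℝ) / 2) *
            (∫ x in outletSlice g (R k) (R (k + 1)),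
              ‖fderivWithin ℝ u (closure (outletSlice g (R k) (R (k + 1)))) x‖ ^ 2) ^
              ((1 : ℝ) / 2) := by
  refine ⟨(36 * (3 * L + 1)) ^ ((1 : ℝ) / 4), by positivity, fun k u hu hvan => ?_⟩
  have hR := le_of_succ_eq_add_div hL hg_pos hR0 hRrec
  have hg₀ : 0 < g (R k) := hg_pos _ (hR k)
  have hlen : R (k + 1) - R k = g (R k) / (2 * L) := by rw [hRrec]; ring
  have hslice : Ioo (R k) (R (k + 1)) ⊆ Ici Rstar := fun t ht => (hR k).trans ht.1.le
  have hg_cont : ContinuousOn g (Ioo (R k) (R (k + 1))) :=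
    (LipschitzOnWith.of_dist_le_mul (K := L.toNNReal) fun s hs t ht => by
      simpa [Real.dist_eq, hL.le] using hg_lip s t hs ht).continuousOn.mono hslice
  have hω := isOpen_outletSlice hg_cont
  have key := integral_pow_four_le_outletSlice
    (by linarith [div_pos hg₀ (by positivity : 0 < 2 * L)]) (by positivity) hg_cont
    (fun t ht => le_three_halves_mul_of_lipschitz hL hg_lip (hR k) ⟨ht.1.le, hRrec k ▸ ht.2.le⟩)
    hu fun x hx => hvan x (Ioo_subset_Icc_self hx)
  have hgrad : ∫ p in outletSlice g (R k) (R (k + 1)),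
      ‖fderivWithin ℝ u (closure (outletSlice g (R k) (R (k + 1)))) p‖ ^ 2 =
      ∫ p in outletSlice g (R k) (R (k + 1)), ‖fderiv ℝ u p‖ ^ 2 :=
    setIntegral_congr_fun hω.measurableSet fun p hp => by
      rw [fderivWithin_of_mem_nhds (mem_of_superset (hω.mem_nhds hp) subset_closure)]
  rw [hgrad]
  refine rpow_one_div_four_le_of_le (integral_nonneg fun _ => by positivity) (by positivity)
    hg₀.le (integral_nonneg fun _ => by positivity) (key.trans_eq ?_)
  rw [hlen]
  field_simp
  ring
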